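/- arXiv:1810.02016 — 3 statements merged into one kernel-verified Lean document; each statement's English description precedes it below -/
import Mathlib

section
/- For each k, let h^{L(k)} and h^{R(k)} be left and right half-edge vectors of common length N(k), built from degree vectors with n(k) distinct left labels and m(k) distinct right labels, and let B_π(k) be the bipartite multigraph induced by a uniformly random permutation π_k ∈ S_{N(k)}. If n(k) → ∞, m(k) → ∞ and N(k) → ∞, then for every integer s ≥ 2 the law of the induced permutation of a uniform random s-edge sample of B_π(k) converges to the uniform distribution on S_s as k → ∞; that is, the sequence (B_π(k)) is asymptotically block-free. -/
/-!
Once `N ≥ s` the law, averaged over `π`, is exactly uniform on `S_s`. For a fixed injective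
listing `g` of the sample, the induced permutation is drawn uniformly among the permutations
sorting the right labels `hR ∘ π ∘ g`. Relabelling the listing by `ρ ∈ S_s` turns the weight of
`σ` into that of `ρ * σ`, and it is absorbed by translating `π`, because any two injections
`Fin s → Fin N` differ by a permutation of `Fin N`. So the `π`-average of the weight of `σ`
does not depend on `σ`; as the weights sum to one, it equals `1 / s!`.
-/

open Finset

namespace FourPointTest

variable {N n m : ℕ}

/-- The set of ways to list the edges of the sample `A` (an `s`-subset of edge indices)
in an order that is nondecreasing by left endpoint. -/
def leftOrds (e : Fin N → Fin n × Fin m) (s : ℕ) (A : Finset (Fin N)) :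
    Finset (Fin s → Fin N) :=
  Finset.univ.filter fun g =>
    Function.Injective g ∧ (∀ i, g i ∈ A) ∧
      ∀ i j : Fin s, i ≤ j → (e (g i)).1 ≤ (e (g j)).1

/-- Given a listing `g` of sampled edges (sorted by left endpoint), the set of permutations
`σ` for which the right endpoints `v_{σ(1)} ≤ … ≤ v_{σ(s)}` are nondecreasing. -/
def rightPerms (e : Fin N → Fin n × Fin m) (s : ℕ) (g : Fin s → Fin N) :
    Finset (Equiv.Perm (Fin s)) :=
  Finset.univ.filter fun σ : Equiv.Perm (Fin s) =>
    ∀ i j : Fin s, i ≤ j → (e (g (σ i))).2 ≤ (e (g (σ j))).2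

/-- The probability that the induced permutation of a uniform random `s`-edge sample of the
bipartite multigraph with edge list `e` equals `σ`: choose an `s`-subset of edges uniformly,
then a uniform ordering of it that is nondecreasing by left endpoint, then a uniform
`σ` among those making the right endpoints nondecreasing. -/
noncomputable def inducedProb (e : Fin N → Fin n × Fin m) (s : ℕ)
    (σ : Equiv.Perm (Fin s)) : ℝ :=
  ((N.choose s : ℝ))⁻¹ *
    ∑ A ∈ Finset.powersetCard s (Finset.univ : Finset (Fin N)),
      ((leftOrds e s A).card : ℝ)⁻¹ *
        ∑ g ∈ leftOrds e s A,
          ((rightPerms e s g).card : ℝ)⁻¹ * (if σ ∈ rightPerms e s g then (1 : ℝ) else 0)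

open scoped Nat

section SortingPerms

variable {β : Type*} [LinearOrder β] {s : ℕ}

def sortingPerms (v : Fin s → β) : Finset (Equiv.Perm (Fin s)) :=
  univ.filter fun σ => Monotone (v ∘ σ)

noncomputable def sortWeight (v : Fin s → β) (σ : Equiv.Perm (Fin s)) : ℝ :=
  ((sortingPerms v).card : ℝ)⁻¹ * if σ ∈ sortingPerms v then 1 else 0

theorem sortingPerms_nonempty (v : Fin s → β) : (sortingPerms v).Nonempty :=
  ⟨Tuple.sort v, by simpa [sortingPerms] using Tuple.monotone_sort v⟩

theorem mem_sortingPerms_comp (v : Fin s → β) (ρ σ : Equiv.Perm (Fin s)) :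
    σ ∈ sortingPerms (v ∘ ρ) ↔ ρ * σ ∈ sortingPerms v := by
  simp [sortingPerms, Function.comp_assoc]

theorem card_sortingPerms_comp (v : Fin s → β) (ρ : Equiv.Perm (Fin s)) :
    (sortingPerms (v ∘ ρ)).card = (sortingPerms v).card :=
  card_equiv (Equiv.mulLeft ρ) fun σ => by simp [mem_sortingPerms_comp]

theorem sortWeight_comp (v : Fin s → β) (ρ σ : Equiv.Perm (Fin s)) :
    sortWeight (v ∘ ρ) σ = sortWeight v (ρ * σ) := by
  simp only [sortWeight, card_sortingPerms_comp, mem_sortingPerms_comp]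

theorem sum_sortWeight (v : Fin s → β) : ∑ σ, sortWeight v σ = 1 := by
  have hcard : ((sortingPerms v).card : ℝ) ≠ 0 := by
    exact_mod_cast (sortingPerms_nonempty v).card_pos.ne'
  simp only [sortWeight, ← mul_sum, sum_boole, filter_mem_eq_inter, univ_inter]
  exact inv_mul_cancel₀ hcard

end SortingPerms

theorem sum_perm_comp_eq_of_injective {ι α M : Type*} [Finite ι] [Fintype α] [DecidableEq α]
    [AddCommMonoid M] (f : (ι → α) → M) {g g' : ι → α} (hg : Function.Injective g)
    (hg' : Function.Injective g') :
    ∑ π : Equiv.Perm α, f (π ∘ g) = ∑ π : Equiv.Perm α, f (π ∘ g') := by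
  obtain ⟨τ, hτ⟩ := Equiv.Perm.exists_extending_pair g' g hg' hg
  have hg_eq : g = τ ∘ g' := funext fun i => (hτ i).symm
  subst hg_eq
  exact Equiv.sum_comp (Equiv.mulRight τ) fun π => f (π ∘ g')

theorem sum_perm_sortWeight {α β : Type*} [Fintype α] [DecidableEq α] [LinearOrder β]
    {s : ℕ} (v : α → β) {g : Fin s → α} (hg : Function.Injective g) (σ : Equiv.Perm (Fin s)) :
    ∑ π : Equiv.Perm α, sortWeight (v ∘ π ∘ g) σ = (Fintype.card α)! / s ! := by
  have hconst : ∀ ρ, ∑ π : Equiv.Perm α, sortWeight (v ∘ π ∘ g) (ρ * σ)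
      = ∑ π : Equiv.Perm α, sortWeight (v ∘ π ∘ g) σ := fun ρ => by
    simp only [← sortWeight_comp]
    exact sum_perm_comp_eq_of_injective (fun h => sortWeight (v ∘ h) σ)
      (hg.comp ρ.injective) hg
  have htotal : ∑ ρ : Equiv.Perm (Fin s), ∑ π : Equiv.Perm α, sortWeight (v ∘ π ∘ g) (ρ * σ)
      = (Fintype.card α)! := by
    rw [sum_comm]
    calc _ = ∑ _π : Equiv.Perm α, (1 : ℝ) := sum_congr rfl fun π _ =>
          (Equiv.sum_comp (Equiv.mulRight σ) (sortWeight (v ∘ π ∘ g))).trans (sum_sortWeight _)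
      _ = _ := by simp [Fintype.card_perm]
  simp only [hconst, sum_const, card_univ, Fintype.card_perm, Fintype.card_fin,
    nsmul_eq_mul] at htotal
  rw [← htotal, mul_div_cancel_left₀ _ (by positivity)]

theorem inv_card_mul_sum_eq_of_forall_eq {ι : Type*} {t : Finset ι} (ht : t.Nonempty)
    {f : ι → ℝ} {c : ℝ} (hf : ∀ x ∈ t, f x = c) : (t.card : ℝ)⁻¹ * ∑ x ∈ t, f x = c := by
  rw [sum_congr rfl hf, sum_const, nsmul_eq_mul, inv_mul_cancel_left₀]
  exact_mod_cast ht.card_pos.ne'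

theorem leftOrds_nonempty (e : Fin N → Fin n × Fin m) {s : ℕ} {A : Finset (Fin N)}
    (hA : A.card = s) : (leftOrds e s A).Nonempty := by
  set f : Fin s → Fin n := fun i => (e (A.orderEmbOfFin hA i)).1
  refine ⟨A.orderEmbOfFin hA ∘ Tuple.sort f, ?_⟩
  simp only [leftOrds, mem_filter, mem_univ, true_and]
  exact ⟨(A.orderEmbOfFin hA).injective.comp (Tuple.sort f).injective,
    fun i => A.orderEmbOfFin_mem hA _, fun i j hij => Tuple.monotone_sort f hij⟩

theorem injective_of_mem_leftOrds {e : Fin N → Fin n × Fin m} {s : ℕ} {A : Finset (Fin N)}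
    {g : Fin s → Fin N} (hg : g ∈ leftOrds e s A) : Function.Injective g :=
  (mem_filter.1 hg).2.1

theorem rightPerms_eq_sortingPerms (e : Fin N → Fin n × Fin m) {s : ℕ} (g : Fin s → Fin N) :
    rightPerms e s g = sortingPerms (Prod.snd ∘ e ∘ g) := by
  ext σ
  simp only [rightPerms, sortingPerms, mem_filter, mem_univ, true_and]
  exact Iff.rfl

theorem sum_perm_inducedProb (hL : Fin N → Fin n) (hR : Fin N → Fin m) {s : ℕ} (hs : s ≤ N)
    (σ : Equiv.Perm (Fin s)) :
    ∑ π : Equiv.Perm (Fin N), inducedProb (fun p => (hL p, hR (π p))) s σ = N ! / s ! := by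
  set L := leftOrds (fun p => (hL p, hR p)) s
  have hsample : ∀ π : Equiv.Perm (Fin N), inducedProb (fun p => (hL p, hR (π p))) s σ
      = (N.choose s : ℝ)⁻¹ * ∑ A ∈ powersetCard s univ,
          ((L A).card : ℝ)⁻¹ * ∑ g ∈ L A, sortWeight (hR ∘ π ∘ g) σ := fun π => by
    simp only [inducedProb, rightPerms_eq_sortingPerms, sortWeight]
    -- `leftOrds` reads only the left endpoints, which `π` does not move
    rfl
  have hchoose : (N.choose s : ℝ) = (powersetCard s (univ : Finset (Fin N))).card := by
    simp
  simp only [hsample, ← mul_sum]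
  rw [sum_comm, hchoose]
  refine inv_card_mul_sum_eq_of_forall_eq (powersetCard_nonempty.2 (by simpa using hs))
    fun A hA => ?_
  rw [← mul_sum, sum_comm]
  refine inv_card_mul_sum_eq_of_forall_eq (leftOrds_nonempty _ (mem_powersetCard.1 hA).2)
    fun g hg => ?_
  simpa using sum_perm_sortWeight hR (injective_of_mem_leftOrds hg) σ

theorem halfEdge_asymptotically_block_free_general
    (n m N : ℕ → ℕ)
    (hL : ∀ k, Fin (N k) → Fin (n k)) (hR : ∀ k, Fin (N k) → Fin (m k))
    (hN : Filter.Tendsto N Filter.atTop Filter.atTop) :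
    ∀ s : ℕ, 2 ≤ s → ∀ σ : Equiv.Perm (Fin s),
      Filter.Tendsto
        (fun k => ((Nat.factorial (N k) : ℝ))⁻¹ *
          ∑ π : Equiv.Perm (Fin (N k)),
            inducedProb (fun p => (hL k p, hR k (π p))) s σ)
        Filter.atTop (nhds (1 / (Nat.factorial s : ℝ))) := by
  intro s _ σ
  refine tendsto_const_nhds.congr' ?_
  filter_upwards [hN.eventually_ge_atTop s] with k hk
  rw [sum_perm_inducedProb (hL k) (hR k) hk σ, ← div_eq_inv_mul,
    div_div_cancel_left' (by positivity), one_div]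

/-- **The half-edge construction driven by a uniform random permutation is asymptotically
block-free.**  A left half-edge vector of length `N` built from a positive degree vector on
`n` labels is exactly a monotone surjection `Fin N → Fin n` (each label `u_i` listed with
multiplicity `w_i`, in increasing order), and similarly on the right.  For a permutation
`π ∈ S_N` the induced bipartite multigraph `B_π` has edge list `p ↦ (h^L_p, h^R_{π(p)})`.
If `n(k), m(k), N(k) → ∞` and `π_k` is uniform on `S_{N(k)}`, then for every `s ≥ 2` the law
of the induced permutation of a uniform random `s`-edge sample converges to the uniform
distribution on `S_s`. -/
theorem halfEdge_asymptotically_block_free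
    (n m N : ℕ → ℕ)
    (hL : ∀ k, Fin (N k) → Fin (n k)) (hR : ∀ k, Fin (N k) → Fin (m k))
    (hLmono : ∀ k, Monotone (hL k)) (hLsurj : ∀ k, Function.Surjective (hL k))
    (hRmono : ∀ k, Monotone (hR k)) (hRsurj : ∀ k, Function.Surjective (hR k))
    (hn : Filter.Tendsto n Filter.atTop Filter.atTop)
    (hm : Filter.Tendsto m Filter.atTop Filter.atTop)
    (hN : Filter.Tendsto N Filter.atTop Filter.atTop) :
    ∀ s : ℕ, 2 ≤ s → ∀ σ : Equiv.Perm (Fin s),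
      Filter.Tendsto
        (fun k => ((Nat.factorial (N k) : ℝ))⁻¹ *
          ∑ π : Equiv.Perm (Fin (N k)),
            inducedProb (fun p => (hL k p, hR k (π p))) s σ)
        Filter.atTop (nhds (1 / (Nat.factorial s : ℝ))) :=
  halfEdge_asymptotically_block_free_general n m N hL hR hN

end FourPointTest
end

section
/- With Z, M, ω, θ, N as in the setup, define Γ_L = M Mᵀ − (1/N) ω ωᵀ and Γ_R = Mᵀ M − (1/N) θ θᵀ. Suppose ζ ∈ ℝ^n is a nonzero vector with Γ_L ζ = λ ζ for some real λ ≠ 0. Then ωᵀζ = 0, the vector ξ := Mᵀζ satisfies Γ_R ξ = λ ξ, and θᵀξ = 0. -/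
/-!
`M` maps `θ = √d` to `ω = √w` and `Mᵀ` maps `ω` back to `θ`, so `ω` is an eigenvector of `M Mᵀ`
with eigenvalue `1`, and `Γ_L = M Mᵀ − ωωᵀ / ‖ω‖²` kills it. As `Γ_L` is symmetric, an eigenvector
`ζ` for `λ ≠ 0` is orthogonal to `ω`; then `M Mᵀ ζ = λ ζ`, hence `Mᵀ M (Mᵀ ζ) = λ Mᵀ ζ`, and
`θ ⬝ Mᵀ ζ = (M θ) ⬝ ζ = ω ⬝ ζ = 0`, so the rank-one correction in `Γ_R` vanishes on `Mᵀ ζ`.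
-/

open Matrix

variable {ι κ K : Type*} [Fintype κ]

lemma Matrix.vecMulVec_mulVec_eq_dotProduct_smul [CommSemiring K] (u : ι → K) (v w : κ → K) :
    vecMulVec u v *ᵥ w = (v ⬝ᵥ w) • u := by
  rw [vecMulVec_mulVec, op_smul_eq_smul]

lemma Matrix.IsSymm.dotProduct_eq_zero_of_mulVec_eq_smul [Fintype ι] [CommRing K] [NoZeroDivisors K]
    {G : Matrix ι ι K} (hG : G.IsSymm) {u z : ι → K} {μ lam : K}
    (hu : G *ᵥ u = μ • u) (hz : G *ᵥ z = lam • z) (hne : μ ≠ lam) : u ⬝ᵥ z = 0 := by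
  have key : lam * (u ⬝ᵥ z) = μ * (u ⬝ᵥ z) :=
    calc lam * (u ⬝ᵥ z) = u ⬝ᵥ (G *ᵥ z) := by rw [hz, dotProduct_smul, smul_eq_mul]
      _ = (G *ᵥ u) ⬝ᵥ z := by rw [dotProduct_mulVec, ← mulVec_transpose, hG]
      _ = μ * (u ⬝ᵥ z) := by rw [hu, smul_dotProduct, smul_eq_mul]
  by_contra h
  exact hne (mul_right_cancel₀ h key).symm

lemma Matrix.isSymm_mul_transpose_sub_smul_vecMulVec [CommRing K] (A : Matrix ι κ K)
    (c : K) (u : ι → K) : (A * Aᵀ - c • vecMulVec u u).IsSymm := by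
  refine IsSymm.sub ?_ (IsSymm.smul ?_ c)
  · rw [IsSymm, transpose_mul, transpose_transpose]
  · exact transpose_vecMulVec u u

section Deflation

variable [Fintype ι] {A : Matrix ι κ K} {u : ι → K} {v : κ → K}

lemma Matrix.mul_transpose_sub_smul_vecMulVec_mulVec_self [Field K] [LinearOrder K]
    [IsStrictOrderedRing K] (hv : A *ᵥ v = u) (hu : Aᵀ *ᵥ u = v) :
    (A * Aᵀ - (u ⬝ᵥ u)⁻¹ • vecMulVec u u) *ᵥ u = 0 := by
  rw [sub_mulVec, smul_mulVec, vecMulVec_mulVec_eq_dotProduct_smul, ← mulVec_mulVec, hu, hv,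
    smul_smul]
  rcases eq_or_ne (u ⬝ᵥ u) 0 with h | h
  · rw [dotProduct_self_eq_zero.mp h, smul_zero, sub_zero]
  · rw [inv_mul_cancel₀ h, one_smul, sub_self]

lemma Matrix.transpose_mul_sub_smul_vecMulVec_mulVec_transpose_mulVec [CommRing K]
    (hv : A *ᵥ v = u) {z : ι → K} (hz : u ⬝ᵥ z = 0) {c lam : K}
    (heig : (A * Aᵀ - c • vecMulVec u u) *ᵥ z = lam • z) (c' : K) :
    v ⬝ᵥ (Aᵀ *ᵥ z) = 0 ∧
      (Aᵀ * A - c' • vecMulVec v v) *ᵥ (Aᵀ *ᵥ z) = lam • (Aᵀ *ᵥ z) := by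
  have hvz : v ⬝ᵥ (Aᵀ *ᵥ z) = 0 := by rw [dotProduct_mulVec, vecMul_transpose, hv, hz]
  have hgram : (A * Aᵀ) *ᵥ z = lam • z := by
    rwa [sub_mulVec, smul_mulVec, vecMulVec_mulVec_eq_dotProduct_smul, hz, zero_smul, smul_zero,
      sub_zero] at heig
  refine ⟨hvz, ?_⟩
  rw [sub_mulVec, smul_mulVec, vecMulVec_mulVec_eq_dotProduct_smul, hvz, zero_smul, smul_zero,
    sub_zero, mulVec_mulVec, Matrix.mul_assoc, ← mulVec_mulVec, hgram, mulVec_smul]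

end Deflation

lemma Matrix.diagonal_inv_sqrt_mul_mul_diagonal_inv_sqrt_mulVec_sqrt [Fintype ι] [DecidableEq ι]
    [DecidableEq κ] (Z : Matrix ι κ ℝ) {w : ι → ℝ} {d : κ → ℝ} (hw : ∀ i, w i = ∑ j, Z i j)
    (hd : ∀ j, 0 < d j) :
    (diagonal (fun i => (√(w i))⁻¹) * Z * diagonal (fun j => (√(d j))⁻¹)) *ᵥ (fun j => √(d j)) =
      fun i => √(w i) := by
  have hdiag : diagonal (fun j => (√(d j))⁻¹) *ᵥ (fun j => √(d j)) = 1 := by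
    ext j
    rw [mulVec_diagonal, inv_mul_cancel₀ (Real.sqrt_pos.mpr (hd j)).ne', Pi.one_apply]
  have hrows : Z *ᵥ 1 = w := by
    ext i
    simp only [mulVec, dotProduct, Pi.one_apply, mul_one, hw]
  ext i
  rw [← mulVec_mulVec, hdiag, ← mulVec_mulVec, hrows, mulVec_diagonal, inv_mul_eq_div,
    Real.div_sqrt]

theorem fiedler_vector_transfer_general (n m : ℕ) (Z : Matrix (Fin n) (Fin m) ℝ)
    (w : Fin n → ℝ) (hw : ∀ i, w i = ∑ j, Z i j) (hwpos : ∀ i, 0 < w i)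
    (d : Fin m → ℝ) (hd : ∀ j, d j = ∑ i, Z i j) (hdpos : ∀ j, 0 < d j)
    (N : ℝ) (hN : N = ∑ i, w i)
    (M : Matrix (Fin n) (Fin m) ℝ)
    (hM : M = Matrix.diagonal (fun i => (Real.sqrt (w i))⁻¹) * Z *
      Matrix.diagonal (fun j => (Real.sqrt (d j))⁻¹))
    (ω : Fin n → ℝ) (hω : ∀ i, ω i = Real.sqrt (w i))
    (θ : Fin m → ℝ) (hθ : ∀ j, θ j = Real.sqrt (d j))
    (ΓL : Matrix (Fin n) (Fin n) ℝ) (hΓL : ΓL = M * Mᵀ - N⁻¹ • Matrix.vecMulVec ω ω)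
    (ΓR : Matrix (Fin m) (Fin m) ℝ) (hΓR : ΓR = Mᵀ * M - N⁻¹ • Matrix.vecMulVec θ θ)
    (lam : ℝ) (hlam : lam ≠ 0)
    (ζ : Fin n → ℝ) (heig : Matrix.mulVec ΓL ζ = lam • ζ)
    (ξ : Fin m → ℝ) (hξ : ξ = Matrix.mulVec Mᵀ ζ) :
    dotProduct ω ζ = 0 ∧
      Matrix.mulVec ΓR ξ = lam • ξ ∧
      dotProduct θ ξ = 0 := by
  have hMθ : M *ᵥ θ = ω := by
    rw [hM, funext hω, funext hθ]
    exact diagonal_inv_sqrt_mul_mul_diagonal_inv_sqrt_mulVec_sqrt Z hw hdpos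
  have hMω : Mᵀ *ᵥ ω = θ := by
    rw [hM, transpose_mul, transpose_mul, diagonal_transpose, diagonal_transpose,
      ← Matrix.mul_assoc, funext hω, funext hθ]
    exact diagonal_inv_sqrt_mul_mul_diagonal_inv_sqrt_mulVec_sqrt Zᵀ hd hwpos
  have hNω : N = ω ⬝ᵥ ω := by
    simp only [hN, dotProduct, hω, Real.mul_self_sqrt (hwpos _).le]
  have hΓLω : ΓL *ᵥ ω = (0 : ℝ) • ω := by
    rw [zero_smul, hΓL, hNω]
    exact mul_transpose_sub_smul_vecMulVec_mulVec_self hMθ hMω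
  have hΓL_symm : ΓL.IsSymm := hΓL ▸ isSymm_mul_transpose_sub_smul_vecMulVec M N⁻¹ ω
  have hωζ : ω ⬝ᵥ ζ = 0 := hΓL_symm.dotProduct_eq_zero_of_mulVec_eq_smul hΓLω heig hlam.symm
  obtain ⟨hθξ, hξ_eig⟩ :=
    transpose_mul_sub_smul_vecMulVec_mulVec_transpose_mulVec hMθ hωζ (hΓL ▸ heig) N⁻¹
  subst hξ hΓR
  exact ⟨hωζ, hξ_eig, hθξ⟩

/-- With `Γ_L = M Mᵀ − (1/N) ω ωᵀ` and `Γ_R = Mᵀ M − (1/N) θ θᵀ` as in the natural-order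
computation: if `ζ ≠ 0` satisfies `Γ_L ζ = λ ζ` with `λ ≠ 0`, then `ωᵀζ = 0`, the vector
`ξ = Mᵀζ` satisfies `Γ_R ξ = λ ξ`, and `θᵀξ = 0`. -/
theorem fiedler_vector_transfer (n m : ℕ) (Z : Matrix (Fin n) (Fin m) ℝ)
    (h01 : ∀ i j, Z i j = 0 ∨ Z i j = 1)
    (w : Fin n → ℝ) (hw : ∀ i, w i = ∑ j, Z i j) (hwpos : ∀ i, 0 < w i)
    (d : Fin m → ℝ) (hd : ∀ j, d j = ∑ i, Z i j) (hdpos : ∀ j, 0 < d j)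
    (N : ℝ) (hN : N = ∑ i, w i)
    (M : Matrix (Fin n) (Fin m) ℝ)
    (hM : M = Matrix.diagonal (fun i => (Real.sqrt (w i))⁻¹) * Z *
      Matrix.diagonal (fun j => (Real.sqrt (d j))⁻¹))
    (ω : Fin n → ℝ) (hω : ∀ i, ω i = Real.sqrt (w i))
    (θ : Fin m → ℝ) (hθ : ∀ j, θ j = Real.sqrt (d j))
    (ΓL : Matrix (Fin n) (Fin n) ℝ) (hΓL : ΓL = M * Mᵀ - N⁻¹ • Matrix.vecMulVec ω ω)
    (ΓR : Matrix (Fin m) (Fin m) ℝ) (hΓR : ΓR = Mᵀ * M - N⁻¹ • Matrix.vecMulVec θ θ)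
    (lam : ℝ) (hlam : lam ≠ 0)
    (ζ : Fin n → ℝ) (hζ : ζ ≠ 0) (heig : Matrix.mulVec ΓL ζ = lam • ζ)
    (ξ : Fin m → ℝ) (hξ : ξ = Matrix.mulVec Mᵀ ζ) :
    dotProduct ω ζ = 0 ∧
      Matrix.mulVec ΓR ξ = lam • ξ ∧
      dotProduct θ ξ = 0 :=
  fiedler_vector_transfer_general n m Z w hw hwpos d hd hdpos N hN M hM ω hω θ hθ ΓL hΓL ΓR hΓR lam
    hlam ζ heig ξ hξ
end

section
/- Every separable permutation avoids the patterns 2413 and 3142; that is, if π is separable, then no 4-element subset of positions of π has standardization equal to 2413 or to 3142. -/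
/-- The direct sum `σ ⊕ τ` of permutations: `(σ⊕τ)(i) = σ(i)` on the first block and
`(σ⊕τ)(n+i) = n + τ(i)` on the second block. -/
def permDirectSum {n m : ℕ} (σ : Equiv.Perm (Fin n)) (τ : Equiv.Perm (Fin m)) :
    Equiv.Perm (Fin (n + m)) :=
  finSumFinEquiv.symm.trans ((Equiv.sumCongr σ τ).trans finSumFinEquiv)

/-- The skew sum `σ ⊖ τ` of permutations: `(σ⊖τ)(i) = σ(i) + m` on the first block and
`(σ⊖τ)(n+i) = τ(i)` on the second block. -/
def permSkewSum {n m : ℕ} (σ : Equiv.Perm (Fin n)) (τ : Equiv.Perm (Fin m)) :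
    Equiv.Perm (Fin (n + m)) :=
  finSumFinEquiv.symm.trans ((Equiv.sumCongr σ τ).trans
    ((Equiv.sumComm (Fin n) (Fin m)).trans
      (finSumFinEquiv.trans (finCongr (Nat.add_comm m n)))))

/-- Separable permutations: the smallest class containing the permutation of length 1 and
closed under direct sums and skew sums. -/
inductive Separable : ∀ {n : ℕ}, Equiv.Perm (Fin n) → Prop
  | single : Separable (Equiv.refl (Fin 1))
  | dsum {n m : ℕ} (σ : Equiv.Perm (Fin n)) (τ : Equiv.Perm (Fin m)) :
      Separable σ → Separable τ → Separable (permDirectSum σ τ)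
  | ssum {n m : ℕ} (σ : Equiv.Perm (Fin n)) (τ : Equiv.Perm (Fin m)) :
      Separable σ → Separable τ → Separable (permSkewSum σ τ)

lemma dsum_castAdd {n m : ℕ} (σ : Equiv.Perm (Fin n)) (τ : Equiv.Perm (Fin m)) (j : Fin n) :
    ((permDirectSum σ τ (Fin.castAdd m j) : Fin (n+m)) : ℕ) = (σ j : ℕ) := by
  rw [permDirectSum, Equiv.trans_apply, Equiv.trans_apply, finSumFinEquiv_symm_apply_castAdd]
  simp

lemma dsum_natAdd {n m : ℕ} (σ : Equiv.Perm (Fin n)) (τ : Equiv.Perm (Fin m)) (j : Fin m) :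
    ((permDirectSum σ τ (Fin.natAdd n j) : Fin (n+m)) : ℕ) = n + (τ j : ℕ) := by
  rw [permDirectSum, Equiv.trans_apply, Equiv.trans_apply, finSumFinEquiv_symm_apply_natAdd]
  simp

lemma ssum_castAdd {n m : ℕ} (σ : Equiv.Perm (Fin n)) (τ : Equiv.Perm (Fin m)) (j : Fin n) :
    ((permSkewSum σ τ (Fin.castAdd m j) : Fin (n+m)) : ℕ) = m + (σ j : ℕ) := by
  rw [permSkewSum, Equiv.trans_apply, Equiv.trans_apply, finSumFinEquiv_symm_apply_castAdd]
  simp [Nat.add_comm]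

lemma ssum_natAdd {n m : ℕ} (σ : Equiv.Perm (Fin n)) (τ : Equiv.Perm (Fin m)) (j : Fin m) :
    ((permSkewSum σ τ (Fin.natAdd n j) : Fin (n+m)) : ℕ) = (τ j : ℕ) := by
  rw [permSkewSum, Equiv.trans_apply, Equiv.trans_apply, finSumFinEquiv_symm_apply_natAdd]
  simp

lemma dsum_val_lt {n m : ℕ} (σ : Equiv.Perm (Fin n)) (τ : Equiv.Perm (Fin m))
    (i : Fin (n+m)) (h : (i:ℕ) < n) :
    ((permDirectSum σ τ i : Fin (n+m)) : ℕ) = (σ ⟨i, h⟩ : ℕ) := by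
  have hi : i = Fin.castAdd m ⟨i, h⟩ := Fin.ext rfl
  conv_lhs => rw [hi]
  exact dsum_castAdd σ τ _

lemma dsum_val_ge {n m : ℕ} (σ : Equiv.Perm (Fin n)) (τ : Equiv.Perm (Fin m))
    (i : Fin (n+m)) (h : n ≤ (i:ℕ)) :
    ((permDirectSum σ τ i : Fin (n+m)) : ℕ) = n + (τ ⟨(i:ℕ) - n, by omega⟩ : ℕ) := by
  have hi : i = Fin.natAdd n ⟨(i:ℕ) - n, by omega⟩ := Fin.ext (by simp; omega)
  conv_lhs => rw [hi]
  exact dsum_natAdd σ τ _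

lemma ssum_val_lt {n m : ℕ} (σ : Equiv.Perm (Fin n)) (τ : Equiv.Perm (Fin m))
    (i : Fin (n+m)) (h : (i:ℕ) < n) :
    ((permSkewSum σ τ i : Fin (n+m)) : ℕ) = m + (σ ⟨i, h⟩ : ℕ) := by
  have hi : i = Fin.castAdd m ⟨i, h⟩ := Fin.ext rfl
  conv_lhs => rw [hi]
  exact ssum_castAdd σ τ _

lemma ssum_val_ge {n m : ℕ} (σ : Equiv.Perm (Fin n)) (τ : Equiv.Perm (Fin m))
    (i : Fin (n+m)) (h : n ≤ (i:ℕ)) :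
    ((permSkewSum σ τ i : Fin (n+m)) : ℕ) = (τ ⟨(i:ℕ) - n, by omega⟩ : ℕ) := by
  have hi : i = Fin.natAdd n ⟨(i:ℕ) - n, by omega⟩ := Fin.ext (by simp; omega)
  conv_lhs => rw [hi]
  exact ssum_natAdd σ τ _

/-- **Separable permutations avoid 2413 and 3142**: a separable permutation has no four
positions `i₁ < i₂ < i₃ < i₄` whose values are ordered as in 2413
(`π(i₃) < π(i₁) < π(i₄) < π(i₂)`) or as in 3142 (`π(i₂) < π(i₄) < π(i₁) < π(i₃)`);
i.e. no 4-element subset of positions has standardization 2413 or 3142. -/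
theorem separable_avoids_2413_3142 (n : ℕ) (π : Equiv.Perm (Fin n))
    (hsep : Separable π) :
    ¬ ∃ i₁ i₂ i₃ i₄ : Fin n, i₁ < i₂ ∧ i₂ < i₃ ∧ i₃ < i₄ ∧
      ((π i₃ < π i₁ ∧ π i₁ < π i₄ ∧ π i₄ < π i₂) ∨
       (π i₂ < π i₄ ∧ π i₄ < π i₁ ∧ π i₁ < π i₃)) := by
  induction hsep with
  | single =>
    rintro ⟨i₁, i₂, i₃, i₄, h12, h23, h34, -⟩
    have := i₁.isLt; have := i₄.isLt
    simp only [Fin.lt_def] at h12 h23 h34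
    omega
  | dsum σ τ hσ hτ ihσ ihτ =>
    rename_i n m
    rintro ⟨i₁, i₂, i₃, i₄, h12, h23, h34, hp⟩
    simp only [Fin.lt_def] at h12 h23 h34 hp
    set π := permDirectSum σ τ with hπ
    -- cross fact: if a < n ≤ b then π a < π b
    have cross : ∀ a b : Fin (n+m), (a:ℕ) < n → n ≤ (b:ℕ) → ((π a : Fin (n+m)) : ℕ) < π b := by
      intro a b ha hb
      rw [dsum_val_lt σ τ a ha, dsum_val_ge σ τ b hb]
      exact lt_of_lt_of_le (σ ⟨a, ha⟩).isLt (Nat.le_add_right _ _)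
    rcases lt_or_ge (i₄:ℕ) n with h4 | h4
    · -- all in first block
      have h1 : (i₁:ℕ) < n := by omega
      have h2 : (i₂:ℕ) < n := by omega
      have h3 : (i₃:ℕ) < n := by omega
      apply ihσ
      refine ⟨⟨i₁, h1⟩, ⟨i₂, h2⟩, ⟨i₃, h3⟩, ⟨i₄, h4⟩, h12, h23, h34, ?_⟩
      rw [dsum_val_lt σ τ i₁ h1, dsum_val_lt σ τ i₂ h2, dsum_val_lt σ τ i₃ h3,
        dsum_val_lt σ τ i₄ h4] at hp
      simpa only [Fin.lt_def] using hp
    · rcases le_or_gt n (i₁:ℕ) with h1 | h1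
      · -- all in second block
        have h2 : n ≤ (i₂:ℕ) := by omega
        have h3 : n ≤ (i₃:ℕ) := by omega
        apply ihτ
        refine ⟨⟨(i₁:ℕ)-n, by omega⟩, ⟨(i₂:ℕ)-n, by omega⟩, ⟨(i₃:ℕ)-n, by omega⟩,
          ⟨(i₄:ℕ)-n, by omega⟩, by simp; omega, by simp; omega, by simp; omega, ?_⟩
        rw [dsum_val_ge σ τ i₁ h1, dsum_val_ge σ τ i₂ h2, dsum_val_ge σ τ i₃ h3,
          dsum_val_ge σ τ i₄ h4] at hp
        simp only [Fin.lt_def]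
        omega
      · -- mixed: i₁ in first, i₄ in second
        rcases hp with ⟨p31, p14, p42⟩ | ⟨p24, p41, p13⟩
        · rcases lt_or_ge (i₂:ℕ) n with h2 | h2
          · exact absurd (cross i₂ i₄ h2 h4) (by omega)
          · have h3 : n ≤ (i₃:ℕ) := by omega
            exact absurd (cross i₁ i₃ h1 h3) (by omega)
        · exact absurd (cross i₁ i₄ h1 h4) (by omega)
  | ssum σ τ hσ hτ ihσ ihτ =>
    rename_i n m
    rintro ⟨i₁, i₂, i₃, i₄, h12, h23, h34, hp⟩
    simp only [Fin.lt_def] at h12 h23 h34 hp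
    set π := permSkewSum σ τ with hπ
    have cross : ∀ a b : Fin (n+m), (a:ℕ) < n → n ≤ (b:ℕ) → ((π b : Fin (n+m)) : ℕ) < π a := by
      intro a b ha hb
      rw [ssum_val_lt σ τ a ha, ssum_val_ge σ τ b hb]
      exact lt_of_lt_of_le (τ ⟨(b:ℕ)-n, by omega⟩).isLt (Nat.le_add_right _ _)
    rcases lt_or_ge (i₄:ℕ) n with h4 | h4
    · have h1 : (i₁:ℕ) < n := by omega
      have h2 : (i₂:ℕ) < n := by omega
      have h3 : (i₃:ℕ) < n := by omega
      apply ihσ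
      refine ⟨⟨i₁, h1⟩, ⟨i₂, h2⟩, ⟨i₃, h3⟩, ⟨i₄, h4⟩, h12, h23, h34, ?_⟩
      rw [ssum_val_lt σ τ i₁ h1, ssum_val_lt σ τ i₂ h2, ssum_val_lt σ τ i₃ h3,
        ssum_val_lt σ τ i₄ h4] at hp
      simp only [Fin.lt_def]
      omega
    · rcases le_or_gt n (i₁:ℕ) with h1 | h1
      · have h2 : n ≤ (i₂:ℕ) := by omega
        have h3 : n ≤ (i₃:ℕ) := by omega
        apply ihτ
        refine ⟨⟨(i₁:ℕ)-n, by omega⟩, ⟨(i₂:ℕ)-n, by omega⟩, ⟨(i₃:ℕ)-n, by omega⟩,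
          ⟨(i₄:ℕ)-n, by omega⟩, by simp; omega, by simp; omega, by simp; omega, ?_⟩
        rw [ssum_val_ge σ τ i₁ h1, ssum_val_ge σ τ i₂ h2, ssum_val_ge σ τ i₃ h3,
          ssum_val_ge σ τ i₄ h4] at hp
        simp only [Fin.lt_def]
        omega
      · rcases hp with ⟨p31, p14, p42⟩ | ⟨p24, p41, p13⟩
        · exact absurd (cross i₁ i₄ h1 h4) (by omega)
        · rcases lt_or_ge (i₃:ℕ) n with h3 | h3
          · have h2 : (i₂:ℕ) < n := by omega
            exact absurd (cross i₂ i₄ h2 h4) (by omega)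
          · exact absurd (cross i₁ i₃ h1 h3) (by omega)
end
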